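/- arXiv:1703.03744 — 3 statements merged into one kernel-verified Lean document; each statement's English description precedes it below -/
import Mathlib

section
/- The polytope P(M) equals Q(M), where Q(M) is the set of x ∈ ℝ^E satisfying x(E) = r(E), 0 ≤ x(e) ≤ 1 for all e ∈ E, and x(A) ≤ r(A) for all A ⊆ E. -/
open Finset

variable {α : Type*} [Fintype α] [DecidableEq α]

/-- A family of subsets is a partition of the ground set `E = univ`. -/
def IsPartitionFam (C : Finset (Finset α)) : Prop :=
  (∀ A ∈ C, A.Nonempty) ∧ ∀ e : α, ∃! A, A ∈ C ∧ e ∈ A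

/-- The downward decomposition property: `X` verifies (P1) or (P2) of
axiom (L17). -/
inductive DecompDown (P L : Finset (Finset α)) (r : Finset α → ℕ) :
    Finset α → Prop
  | empty : DecompDown P L r ∅
  | viaLocked (X l : Finset α) : l ∈ L → l ⊂ X → r X = r l + r (X \ l) →
      DecompDown P L r (X \ l) → DecompDown P L r X
  | viaParallel (X p : Finset α) : p ∈ P → (p ∩ X).Nonempty →
      r X = r p + r (X \ p) → DecompDown P L r (X \ p) → DecompDown P L r X

/-- The upward decomposition property: `X` verifies (P3) or (P4) of
axiom (L17). -/
inductive DecompUp (S L : Finset (Finset α)) (r : Finset α → ℕ) :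
    Finset α → Prop
  | full : DecompUp S L r Finset.univ
  | viaLocked (X l : Finset α) : l ∈ L → X ⊂ l →
      r X + r Finset.univ = r l + r (X ∪ (Finset.univ \ l)) →
      DecompUp S L r (X ∪ (Finset.univ \ l)) → DecompUp S L r X
  | viaSeries (X s : Finset α) : s ∈ S → (Finset.univ \ s) ∪ X ≠ Finset.univ →
      r X + r Finset.univ = r (Finset.univ \ s) + r (X ∪ s) + (s ∩ X).card →
      DecompUp S L r (X ∪ s) → DecompUp S L r X

/-- A locked system `M = (E, 𝒫, 𝒮, ℒ, r)` on the ground set `E = univ`,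
satisfying Chaourar's locked axioms (L1)–(L19), with (L8)–(L11) taken in the
equivalent strengthened forms (LL8)–(LL11). -/
structure LockedSystem (α : Type*) [Fintype α] [DecidableEq α] where
  P : Finset (Finset α)
  S : Finset (Finset α)
  L : Finset (Finset α)
  r : Finset α → ℕ
  ax1 : (Finset.univ : Finset α).Nonempty
  ax2P : IsPartitionFam P
  ax2S : IsPartitionFam S
  ax3 : ∀ p ∈ P, ∀ s ∈ S, (p ∩ s).Nonempty → p.card = 1 ∨ s.card = 1
  ax4 : ∀ l ∈ L, l.Nonempty ∧ l ≠ Finset.univ ∧ l ∉ P ∧ l ∉ S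
  ax5 : ∀ X ∈ P ∪ S, ∀ l ∈ L, X ∩ l = ∅ ∨ X ⊆ l
  ax7 : r ∅ = 0 ∧ ∀ X, r X ≤ r Finset.univ
  ax8 : ∀ p ∈ P, r p = 1
  ax9 : ∀ p ∈ P, r (Finset.univ \ p) = r Finset.univ
  ax10 : ∀ s ∈ S, r s = s.card
  ax11 : ∀ s ∈ S, r (Finset.univ \ s) + s.card = r Finset.univ + 1
  ax12 : ∀ l ∈ L, 2 ≤ r l ∧ r Finset.univ + 2 ≤ r l + (Finset.univ \ l).card
  ax13 : ∀ X ∈ P ∪ L ∪ {∅, Finset.univ}, ∀ Y ∈ P ∪ L ∪ {∅, Finset.univ},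
      X ⊂ Y → r X < r Y
  ax14 : ∀ X ∈ P ∪ S ∪ L ∪ {∅, Finset.univ},
      ∀ Y ∈ P ∪ S ∪ L ∪ {∅, Finset.univ},
      r (X ∩ Y) + r (X ∪ Y) ≤ r X + r Y
  ax15 : ∀ l ∈ L, ∀ X Y : Finset α, l = X ∪ Y → X ∩ Y = ∅ → X.Nonempty →
      Y.Nonempty → r l < r X + r Y
  ax16 : ∀ l ∈ L, ∀ X Y : Finset α, l = X ∩ Y → X ∪ Y = Finset.univ →
      X ≠ Finset.univ → Y ≠ Finset.univ → r l + r Finset.univ < r X + r Y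
  ax17 : ∀ X : Finset α, X ∉ P → X ∉ S → X ∉ L → X ≠ ∅ → X ≠ Finset.univ →
      DecompDown P L r X ∨ DecompUp S L r X
  ax18 : ∀ l1 ∈ L, ∀ l2 ∈ L, (l1 ∩ l2).Nonempty → l1 ∩ l2 ∉ L →
      DecompDown P L r (l1 ∩ l2)
  ax19 : ∀ l1 ∈ L, ∀ l2 ∈ L, l1 ∪ l2 ≠ Finset.univ → l1 ∪ l2 ∉ L →
      DecompUp S L r (l1 ∪ l2)

namespace LockedSystem

/-- The polytope `P(M)` of a locked system `M`, defined by `x(E) = r(E)`,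
`x(P) ≤ 1` for `P ∈ 𝒫`, `x(S) ≥ |S| − 1` for `S ∈ 𝒮`, and `x(L) ≤ r(L)`
for `L ∈ ℒ`. -/
def polytope (M : LockedSystem α) : Set (α → ℝ) :=
  {x | (∑ e, x e) = M.r Finset.univ ∧
    (∀ p ∈ M.P, ∑ e ∈ p, x e ≤ 1) ∧
    (∀ s ∈ M.S, (s.card : ℝ) - 1 ≤ ∑ e ∈ s, x e) ∧
    (∀ l ∈ M.L, ∑ e ∈ l, x e ≤ M.r l)}

end LockedSystem

section Aux

variable {M : LockedSystem α} {x : α → ℝ}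

private lemma aux_le_one
    (hP : ∀ p ∈ M.P, ∑ e ∈ p, x e ≤ 1)
    (hS : ∀ s ∈ M.S, (s.card : ℝ) - 1 ≤ ∑ e ∈ s, x e)
    (e : α) : x e ≤ 1 := by
  obtain ⟨p, ⟨hpP, hep⟩, -⟩ := M.ax2P.2 e
  have key : ∀ f ∈ p.erase e, 0 ≤ x f := by
    intro f hf
    obtain ⟨s, ⟨hsS, hfs⟩, -⟩ := M.ax2S.2 f
    have hps : (p ∩ s).Nonempty :=
      ⟨f, Finset.mem_inter.mpr ⟨Finset.mem_of_mem_erase hf, hfs⟩⟩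
    rcases M.ax3 p hpP s hsS hps with hc | hc
    · exact absurd
        (Finset.card_le_one.mp (le_of_eq hc) f (Finset.mem_of_mem_erase hf) e hep)
        (Finset.ne_of_mem_erase hf)
    · obtain ⟨a, ha⟩ := Finset.card_eq_one.mp hc
      subst ha
      have hfa : f = a := Finset.mem_singleton.mp hfs
      have := hS {a} hsS
      simp only [Finset.card_singleton, Nat.cast_one, sub_self,
        Finset.sum_singleton] at this
      simpa [hfa] using this
  have hnn : 0 ≤ ∑ f ∈ p.erase e, x f := Finset.sum_nonneg key
  have heq := Finset.sum_erase_add p x hep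
  have := hP p hpP
  linarith

private lemma aux_nonneg
    (hS : ∀ s ∈ M.S, (s.card : ℝ) - 1 ≤ ∑ e ∈ s, x e)
    (h1 : ∀ e, x e ≤ 1) (e : α) : 0 ≤ x e := by
  obtain ⟨s, ⟨hsS, hes⟩, -⟩ := M.ax2S.2 e
  have hb : ∑ f ∈ s.erase e, x f ≤ (s.erase e).card • (1 : ℝ) :=
    Finset.sum_le_card_nsmul _ _ _ (fun f _ => h1 f)
  have hcard : (s.erase e).card = s.card - 1 := Finset.card_erase_of_mem hes
  have hpos : 1 ≤ s.card := Finset.card_pos.mpr ⟨e, hes⟩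
  have hcast : ((s.erase e).card : ℝ) = (s.card : ℝ) - 1 := by
    rw [hcard, Nat.cast_sub hpos, Nat.cast_one]
  rw [nsmul_eq_mul, mul_one, hcast] at hb
  have heq := Finset.sum_erase_add s x hes
  have := hS s hsS
  linarith

private lemma aux_down
    (h0 : ∀ e, 0 ≤ x e)
    (hP : ∀ p ∈ M.P, ∑ e ∈ p, x e ≤ 1)
    (hL : ∀ l ∈ M.L, ∑ e ∈ l, x e ≤ M.r l)
    {X : Finset α} (h : DecompDown M.P M.L M.r X) :
    ∑ e ∈ X, x e ≤ M.r X := by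
  induction h with
  | empty => simp [M.ax7.1]
  | viaLocked X l hl hsub heq _ ih =>
    have hsplit : ∑ e ∈ X, x e = ∑ e ∈ l, x e + ∑ e ∈ X \ l, x e := by
      rw [add_comm, Finset.sum_sdiff hsub.subset]
    have hLl := hL l hl
    have hcast : (M.r X : ℝ) = M.r l + M.r (X \ l) := by exact_mod_cast heq
    rw [hsplit, hcast]; linarith
  | viaParallel X p hp hne heq _ ih =>
    have hsplit : ∑ e ∈ X, x e = ∑ e ∈ X ∩ p, x e + ∑ e ∈ X \ p, x e :=
      (Finset.sum_inter_add_sum_sdiff X p x).symm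
    have hpx : ∑ e ∈ X ∩ p, x e ≤ 1 := by
      have hsub : X ∩ p ⊆ p := Finset.inter_subset_right
      have hmono : ∑ e ∈ X ∩ p, x e ≤ ∑ e ∈ p, x e :=
        Finset.sum_le_sum_of_subset_of_nonneg hsub (fun i _ _ => h0 i)
      linarith [hP p hp]
    have hcast : (M.r X : ℝ) = 1 + M.r (X \ p) := by
      rw [heq, M.ax8 p hp]; push_cast; ring
    rw [hsplit, hcast]; linarith

private lemma aux_up
    (h1 : ∀ e, x e ≤ 1)
    (hE : (∑ e, x e) = M.r Finset.univ)
    (hS : ∀ s ∈ M.S, (s.card : ℝ) - 1 ≤ ∑ e ∈ s, x e)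
    (hL : ∀ l ∈ M.L, ∑ e ∈ l, x e ≤ M.r l)
    {X : Finset α} (h : DecompUp M.S M.L M.r X) :
    ∑ e ∈ X, x e ≤ M.r X := by
  induction h with
  | full => exact le_of_eq hE
  | viaLocked X l hl hsub heq _ ih =>
    have hdisj : Disjoint X (Finset.univ \ l) :=
      Finset.disjoint_sdiff.mono_left hsub.subset
    have hsplit : ∑ e ∈ X ∪ (Finset.univ \ l), x e =
        ∑ e ∈ X, x e + ∑ e ∈ Finset.univ \ l, x e := Finset.sum_union hdisj
    have hcompl : ∑ e ∈ Finset.univ \ l, x e =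
        (∑ e, x e) - ∑ e ∈ l, x e := by
      rw [eq_sub_iff_add_eq, Finset.sum_sdiff (Finset.subset_univ l)]
    have hLl := hL l hl
    have hcast : (M.r X : ℝ) + M.r Finset.univ =
        M.r l + M.r (X ∪ (Finset.univ \ l)) := by exact_mod_cast heq
    linarith
  | viaSeries X s hs hne heq _ ih =>
    have hsplit : ∑ e ∈ X ∪ s, x e = ∑ e ∈ X, x e + ∑ e ∈ s \ X, x e := by
      rw [← Finset.union_sdiff_self_eq_union, Finset.sum_union Finset.disjoint_sdiff]
    have hs2 : ∑ e ∈ s ∩ X, x e + ∑ e ∈ s \ X, x e = ∑ e ∈ s, x e :=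
      Finset.sum_inter_add_sum_sdiff s X x
    have hsx : ∑ e ∈ s ∩ X, x e ≤ ((s ∩ X).card : ℝ) := by
      have := Finset.sum_le_card_nsmul (s ∩ X) x 1 (fun f _ => h1 f)
      simpa using this
    have h11 : (M.r (Finset.univ \ s) : ℝ) + s.card = M.r Finset.univ + 1 := by
      exact_mod_cast M.ax11 s hs
    have hcast : (M.r X : ℝ) + M.r Finset.univ =
        M.r (Finset.univ \ s) + M.r (X ∪ s) + (s ∩ X).card := by
      exact_mod_cast heq
    have hSs := hS s hs
    linarith

private lemma aux_all
    (hE : (∑ e, x e) = M.r Finset.univ)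
    (hP : ∀ p ∈ M.P, ∑ e ∈ p, x e ≤ 1)
    (hS : ∀ s ∈ M.S, (s.card : ℝ) - 1 ≤ ∑ e ∈ s, x e)
    (hL : ∀ l ∈ M.L, ∑ e ∈ l, x e ≤ M.r l)
    (h0 : ∀ e, 0 ≤ x e) (h1 : ∀ e, x e ≤ 1)
    (A : Finset α) : ∑ e ∈ A, x e ≤ M.r A := by
  by_cases hp : A ∈ M.P
  · rw [M.ax8 A hp]; simpa using hP A hp
  by_cases hs : A ∈ M.S
  · rw [M.ax10 A hs]
    have := Finset.sum_le_card_nsmul A x 1 (fun f _ => h1 f)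
    simpa using this
  by_cases hl : A ∈ M.L
  · exact hL A hl
  by_cases he : A = ∅
  · simp [he, M.ax7.1]
  by_cases hu : A = Finset.univ
  · subst hu; exact le_of_eq hE
  rcases M.ax17 A hp hs hl he hu with h | h
  · exact aux_down h0 hP hL h
  · exact aux_up h1 hE hS hL h

end Aux

/-- `P(M) = Q(M)`, where `Q(M)` is defined by `x(E) = r(E)`,
`0 ≤ x(e) ≤ 1` for all `e`, and `x(A) ≤ r(A)` for all `A ⊆ E`. -/
theorem polytope_eq_Q (M : LockedSystem α) :
    M.polytope = {x : α → ℝ | (∑ e, x e) = M.r Finset.univ ∧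
      (∀ e : α, 0 ≤ x e ∧ x e ≤ 1) ∧
      (∀ A : Finset α, ∑ e ∈ A, x e ≤ M.r A)} := by
  ext x
  simp only [LockedSystem.polytope, Set.mem_setOf_eq]
  constructor
  · rintro ⟨hE, hP, hS, hL⟩
    have h1 : ∀ e, x e ≤ 1 := aux_le_one hP hS
    have h0 : ∀ e, 0 ≤ x e := aux_nonneg hS h1
    exact ⟨hE, fun e => ⟨h0 e, h1 e⟩, aux_all hE hP hS hL h0 h1⟩
  · rintro ⟨hE, hb, hA⟩
    refine ⟨hE, fun p hp => ?_, fun s hs => ?_, fun l _ => hA l⟩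
    · have := hA p
      rw [M.ax8 p hp] at this
      simpa using this
    · have h1 := hA (Finset.univ \ s)
      have h2 : (M.r (Finset.univ \ s) : ℝ) + s.card = M.r Finset.univ + 1 := by
        exact_mod_cast M.ax11 s hs
      have hsum : ∑ e ∈ Finset.univ \ s, x e = (∑ e, x e) - ∑ e ∈ s, x e := by
        rw [eq_sub_iff_add_eq, Finset.sum_sdiff (Finset.subset_univ s)]
      linarith
end

section
/- In the graphic matroid M(K4) on 6 elements, the locked subsets are exactly the four triangles of K4; each has cardinality 3 and rank 2, and hence M(K4) has exactly 4 locked subsets. -/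
open Set Matroid

variable {α : Type*}

/-- The (ℕ-valued) rank of a set in a matroid: the largest cardinality of an
independent subset. -/
noncomputable def Matroid.rnk (M : Matroid α) (X : Set α) : ℕ :=
  sSup (Set.ncard '' {I | M.Indep I ∧ I ⊆ X})

/-- `C` is a circuit of `M`: a minimal dependent set. -/
def Matroid.IsCircuitSet (M : Matroid α) (C : Set α) : Prop :=
  C ⊆ M.E ∧ ¬ M.Indep C ∧ ∀ x ∈ C, M.Indep (C \ {x})

/-- A matroid is 2-connected (connected in Oxley's sense) if it is nonempty and
every two distinct elements of the ground set lie on a common circuit. -/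
def Matroid.TwoConnected (M : Matroid α) : Prop :=
  M.E.Nonempty ∧ ∀ e ∈ M.E, ∀ f ∈ M.E, e ≠ f →
    ∃ C, M.IsCircuitSet C ∧ e ∈ C ∧ f ∈ C

/-- `L` is locked in `M` if `M|L` and `M✶|(E\L)` are 2-connected and both
`r(L)` and `r✶(E\L)` are at least `2`. -/
def Matroid.Locked (M : Matroid α) (L : Set α) : Prop :=
  L ⊂ M.E ∧ (M ↾ L).TwoConnected ∧ (M✶ ↾ (M.E \ L)).TwoConnected ∧
    2 ≤ M.rnk L ∧ 2 ≤ M✶.rnk (M.E \ L)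

/-- The edge set of the complete graph `K₄` on vertices `Fin 4`. -/
abbrev K4Edge := {p : Fin 4 × Fin 4 // p.1 < p.2}

/-- An edge is incident to a vertex. -/
def K4incident (v : Fin 4) (e : K4Edge) : Prop := e.1.1 = v ∨ e.1.2 = v

/-- The triangle of `K₄` avoiding the vertex `v`. -/
def K4triangle (v : Fin 4) : Set K4Edge := {e | ¬ K4incident v e}

/-- A perfect matching of `K₄`: two vertex-disjoint edges. -/
def K4IsMatching (m : Set K4Edge) : Prop :=
  m.ncard = 2 ∧ ∀ e ∈ m, ∀ f ∈ m, e ≠ f → ∀ v, ¬ (K4incident v e ∧ K4incident v f)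

/-- Edge sets of cycles of `K₄`: the triangles and the 4-cycles
(complements of perfect matchings). -/
def K4IsCycle (C : Set K4Edge) : Prop :=
  (∃ v, C = K4triangle v) ∨ (∃ m, K4IsMatching m ∧ C = Set.univ \ m)

/-!
Everything is finite, so the theorem is a computation once the matroid is presented by data.
On a finite ground set, independence, rank and the 2-connectivity of restrictions are all
determined by the list of circuits, and the circuits of the dual are the minimal sets meeting
every base. For `M(K₄)` the circuits are the triangles and the 4-cycles, the bases the 3-edge
sets other than triangles, and the circuits of the dual the vertex stars and the 4-cycles; with
this data the locked condition is decided for each of the 64 edge sets.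
-/

lemma Finset.maximal_coe_iff {α : Type*} [Finite α] {P : Set α → Prop} {s : Finset α} :
    Maximal P ↑s ↔ Maximal (fun t : Finset α => P ↑t) s :=
  Finset.coeEmb.maximal_apply_mem_iff (t := {X | P X}) fun X _ => X.toFinite.exists_finset_coe

lemma Finset.minimal_coe_iff {α : Type*} [Finite α] {P : Set α → Prop} {s : Finset α} :
    Minimal P ↑s ↔ Minimal (fun t : Finset α => P ↑t) s :=
  Finset.coeEmb.minimal_apply_mem_iff (t := {X | P X}) fun X _ => X.toFinite.exists_finset_coe

namespace Matroid

variable {α : Type*} {M : Matroid α}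

lemma isCircuitSet_iff_isCircuit {C : Set α} : M.IsCircuitSet C ↔ M.IsCircuit C := by
  rw [isCircuit_iff_dep_forall_sdiff_singleton_indep, dep_iff, IsCircuitSet]
  tauto

lemma twoConnected_restrict_iff {L : Set α} (hL : L ⊆ M.E) :
    (M ↾ L).TwoConnected ↔
      L.Nonempty ∧ ∀ e ∈ L, ∀ f ∈ L, e ≠ f → ∃ C, M.IsCircuit C ∧ C ⊆ L ∧ e ∈ C ∧ f ∈ C := by
  simp only [TwoConnected, restrict_ground_eq, isCircuitSet_iff_isCircuit,
    restrict_isCircuit_iff hL, and_assoc]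

lemma rnk_coe_eq_sup [DecidableEq α] {P : Finset α → Prop} [DecidablePred P]
    (hP : ∀ t : Finset α, M.Indep ↑t ↔ P t) (s : Finset α) :
    M.rnk ↑s = (s.powerset.filter P).sup Finset.card := by
  refine IsGreatest.csSup_eq ⟨?_, ?_⟩
  · obtain ⟨t, ht, hmax⟩ := Finset.exists_mem_eq_sup _
      ⟨∅, Finset.mem_filter.2 ⟨s.empty_mem_powerset, (hP ∅).1 (by simp)⟩⟩ Finset.card
    rw [Finset.mem_filter, Finset.mem_powerset] at ht
    exact ⟨t, ⟨(hP t).2 ht.2, by exact_mod_cast ht.1⟩, by rw [ncard_coe_finset, hmax]⟩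
  · rintro _ ⟨I, ⟨hI, hIs⟩, rfl⟩
    obtain ⟨t, rfl⟩ := (s.finite_toSet.subset hIs).exists_finset_coe
    rw [ncard_coe_finset]
    exact Finset.le_sup (Finset.mem_filter.2
      ⟨Finset.mem_powerset.2 (by exact_mod_cast hIs), (hP t).1 hI⟩)

end Matroid

namespace CircuitList

variable {α : Type*} (cs : List (Finset α))

def Indep (s : Finset α) : Prop := ∀ c ∈ cs, ¬ c ⊆ s

instance [DecidableEq α] : DecidablePred (Indep cs) := fun _ => by
  unfold Indep; infer_instance

def IsBase [DecidableEq α] (b : Finset α) : Prop :=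
  Indep cs b ∧ ∀ e ∉ b, ¬ Indep cs (insert e b)

instance [DecidableEq α] [Fintype α] : DecidablePred (IsBase cs) := fun _ => by
  unfold IsBase; infer_instance

def rank [DecidableEq α] (s : Finset α) : ℕ := (s.powerset.filter (Indep cs)).sup Finset.card

def TwoConnected (l : Finset α) : Prop :=
  l.Nonempty ∧ ∀ e ∈ l, ∀ f ∈ l, e ≠ f → ∃ c ∈ cs, c ⊆ l ∧ e ∈ c ∧ f ∈ c

instance [DecidableEq α] : DecidablePred (TwoConnected cs) := fun _ => by
  unfold TwoConnected; infer_instance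

def Locked [DecidableEq α] [Fintype α] (ks : List (Finset α)) (l : Finset α) : Prop :=
  l ≠ Finset.univ ∧ TwoConnected cs l ∧ TwoConnected ks (Finset.univ \ l) ∧
    2 ≤ rank cs l ∧ 2 ≤ rank ks (Finset.univ \ l)

instance [DecidableEq α] [Fintype α] (ks : List (Finset α)) : DecidablePred (Locked cs ks) :=
  fun _ => by unfold Locked; infer_instance

def IsMinimalTransversal [DecidableEq α] (bs : Finset (Finset α)) (k : Finset α) : Prop :=
  (∀ b ∈ bs, ¬ Disjoint k b) ∧ ∀ x ∈ k, ∃ b ∈ bs, Disjoint (k.erase x) b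

instance [DecidableEq α] (bs : Finset (Finset α)) : DecidablePred (IsMinimalTransversal bs) :=
  fun _ => by unfold IsMinimalTransversal; infer_instance

variable {cs} {N : Matroid α}

lemma indep_iff (hN : N.E = Set.univ) (hcs : ∀ c : Finset α, N.IsCircuit ↑c ↔ c ∈ cs)
    (s : Finset α) : N.Indep ↑s ↔ Indep cs s := by
  rw [Matroid.indep_iff_forall_subset_not_isCircuit (by simp [hN])]
  refine ⟨fun h c hc hcs' => h c (by exact_mod_cast hcs') ((hcs c).2 hc), fun h C hC hCirc => ?_⟩
  obtain ⟨c, rfl⟩ := (s.finite_toSet.subset hC).exists_finset_coe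
  exact h c ((hcs c).1 hCirc) (by exact_mod_cast hC)

lemma isBase_iff [DecidableEq α] [Fintype α] (hN : N.E = Set.univ)
    (hcs : ∀ c : Finset α, N.IsCircuit ↑c ↔ c ∈ cs) (b : Finset α) :
    N.IsBase ↑b ↔ IsBase cs b := by
  rw [Matroid.isBase_iff_maximal_indep, Finset.maximal_coe_iff,
    Finset.maximal_iff_forall_insert fun _ _ ht hst => ht.subset (Finset.coe_subset.2 hst)]
  simp only [indep_iff hN hcs, IsBase]

lemma dual_isCircuit_iff [DecidableEq α] [Fintype α] {bs : Finset (Finset α)}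
    (hbs : ∀ b : Finset α, N.IsBase ↑b ↔ b ∈ bs) (k : Finset α) :
    N✶.IsCircuit ↑k ↔ IsMinimalTransversal bs k := by
  have meets_bases (t : Finset α) :
      (∀ B, N.IsBase B → (↑t ∩ B).Nonempty) ↔ ∀ b ∈ bs, ¬ Disjoint t b := by
    refine ⟨fun h b hb => ?_, fun h B hB => ?_⟩
    · rw [Finset.not_disjoint_iff_nonempty_inter, ← Finset.coe_nonempty, Finset.coe_inter]
      exact h b ((hbs b).2 hb)
    · obtain ⟨b, rfl⟩ := B.toFinite.exists_finset_coe
      rw [← Finset.coe_inter, Finset.coe_nonempty, ← Finset.not_disjoint_iff_nonempty_inter]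
      exact h b ((hbs b).1 hB)
  rw [← Matroid.isCocircuit_def, Matroid.isCocircuit_iff_minimal, Finset.minimal_coe_iff]
  simp only [meets_bases]
  rw [Finset.minimal_iff_forall_erase fun _ _ ht hts b hb hd => ht b hb (hd.mono_left hts)]
  simp only [IsMinimalTransversal, not_forall, not_not, exists_prop]

lemma twoConnected_restrict_iff (hN : N.E = Set.univ)
    (hcs : ∀ c : Finset α, N.IsCircuit ↑c ↔ c ∈ cs) (l : Finset α) :
    (N ↾ ↑l).TwoConnected ↔ TwoConnected cs l := by
  rw [Matroid.twoConnected_restrict_iff (by simp [hN]), TwoConnected, Finset.coe_nonempty]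
  refine and_congr_right fun _ => forall₂_congr fun e _ => forall₂_congr fun f _ =>
    imp_congr_right fun _ => ⟨?_, ?_⟩
  · rintro ⟨C, hC, hCl, he, hf⟩
    obtain ⟨c, rfl⟩ := (l.finite_toSet.subset hCl).exists_finset_coe
    exact ⟨c, (hcs c).1 hC, by exact_mod_cast hCl, he, hf⟩
  · rintro ⟨c, hc, hcl, he, hf⟩
    exact ⟨c, (hcs c).2 hc, by exact_mod_cast hcl, he, hf⟩

lemma rnk_eq [DecidableEq α] (hN : N.E = Set.univ)
    (hcs : ∀ c : Finset α, N.IsCircuit ↑c ↔ c ∈ cs) (s : Finset α) : N.rnk ↑s = rank cs s :=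
  Matroid.rnk_coe_eq_sup (indep_iff hN hcs) s

lemma locked_iff [DecidableEq α] [Fintype α] {ks : List (Finset α)} (hN : N.E = Set.univ)
    (hcs : ∀ c : Finset α, N.IsCircuit ↑c ↔ c ∈ cs)
    (hks : ∀ k : Finset α, N✶.IsCircuit ↑k ↔ k ∈ ks) (l : Finset α) :
    N.Locked ↑l ↔ Locked cs ks l := by
  have hcompl : N.E \ ↑l = ↑(Finset.univ \ l) := by simp [hN]
  rw [Matroid.Locked, hcompl, twoConnected_restrict_iff hN hcs,
    twoConnected_restrict_iff (N := N✶) hN hks, rnk_eq hN hcs, rnk_eq (N := N✶) hN hks, hN,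
    Set.ssubset_univ_iff, Ne, Finset.coe_eq_univ, Locked]

end CircuitList

namespace K4

instance (v : Fin 4) (e : K4Edge) : Decidable (K4incident v e) := by
  unfold K4incident; infer_instance

def edge (i j : Fin 4) (h : i < j := by decide) : K4Edge := ⟨(i, j), h⟩

def triangle (v : Fin 4) : Finset K4Edge := Finset.univ.filter (¬ K4incident v ·)

lemma coe_triangle (v : Fin 4) : (triangle v : Set K4Edge) = K4triangle v := by
  ext; simp [triangle, K4triangle]

lemma triangle_injective : Function.Injective triangle := by decide

lemma _root_.K4triangle_injective : Function.Injective K4triangle := fun v w h =>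
  triangle_injective (Finset.coe_injective (by rw [coe_triangle, coe_triangle, h]))

def matchings : List (Finset K4Edge) :=
  [{edge 0 1, edge 2 3}, {edge 0 2, edge 1 3}, {edge 0 3, edge 1 2}]

def circuits : List (Finset K4Edge) :=
  (List.finRange 4).map triangle ++ matchings.map (Finset.univ \ ·)

def cocircuits : List (Finset K4Edge) :=
  (List.finRange 4).map (Finset.univ \ triangle ·) ++ matchings.map (Finset.univ \ ·)

def bases : Finset (Finset K4Edge) :=
  (Finset.univ.powersetCard 3).filter fun b => ∀ v, b ≠ triangle v

set_option synthInstance.maxSize 2000 in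
lemma isMatching_coe_iff (m : Finset K4Edge) : K4IsMatching ↑m ↔ m ∈ matchings := by
  simp only [K4IsMatching, Set.ncard_coe_finset, Finset.mem_coe]
  revert m
  decide

lemma isBase_iff_mem_bases : ∀ b, CircuitList.IsBase circuits b ↔ b ∈ bases := by decide

lemma isMinimalTransversal_iff :
    ∀ k, CircuitList.IsMinimalTransversal bases k ↔ k ∈ cocircuits := by decide

set_option maxRecDepth 2000 in
lemma locked_iff :
    ∀ l, CircuitList.Locked circuits cocircuits l ↔ ∃ v, l = triangle v := by
  decide

lemma rank_triangle : ∀ v, CircuitList.rank circuits (triangle v) = 2 := by decide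

lemma card_triangle : ∀ v, (triangle v).card = 3 := by decide

lemma isCycle_coe_iff (c : Finset K4Edge) : K4IsCycle ↑c ↔ c ∈ circuits := by
  simp only [K4IsCycle, circuits, List.mem_append, List.mem_map, List.mem_finRange, true_and,
    ← coe_triangle, Finset.coe_inj, eq_comm]
  refine or_congr_right ⟨?_, ?_⟩
  · rintro ⟨m, hm, hcm⟩
    obtain ⟨m, rfl⟩ := m.toFinite.exists_finset_coe
    refine ⟨m, (isMatching_coe_iff m).1 hm, ?_⟩
    rw [← Finset.coe_inj, Finset.coe_sdiff, Finset.coe_univ, hcm]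
  · rintro ⟨m, hm, rfl⟩
    exact ⟨m, (isMatching_coe_iff m).2 hm, by push_cast; rfl⟩

variable {M : Matroid K4Edge}

lemma isCircuit_coe_iff (hcirc : ∀ C, M.IsCircuitSet C ↔ K4IsCycle C) (c : Finset K4Edge) :
    M.IsCircuit ↑c ↔ c ∈ circuits := by
  rw [← Matroid.isCircuitSet_iff_isCircuit, hcirc, isCycle_coe_iff]

lemma dual_isCircuit_coe_iff (hE : M.E = Set.univ)
    (hcirc : ∀ C, M.IsCircuitSet C ↔ K4IsCycle C) (k : Finset K4Edge) :
    M✶.IsCircuit ↑k ↔ k ∈ cocircuits := by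
  have hbs (b : Finset K4Edge) : M.IsBase ↑b ↔ b ∈ bases :=
    (CircuitList.isBase_iff hE (isCircuit_coe_iff hcirc) b).trans (isBase_iff_mem_bases b)
  rw [CircuitList.dual_isCircuit_iff hbs, isMinimalTransversal_iff]

end K4

/-- In the cycle matroid `M(K₄)` (the matroid on the 6 edges of `K₄` whose
circuits are the edge sets of cycles), the locked subsets are exactly the four
triangles; each has cardinality 3 and rank 2, and there are exactly 4 locked
subsets. -/
theorem k4_locked (M : Matroid K4Edge) (hE : M.E = Set.univ)
    (hcirc : ∀ C, M.IsCircuitSet C ↔ K4IsCycle C) :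
    {L | M.Locked L} = {C | ∃ v, C = K4triangle v} ∧
      (∀ v, (K4triangle v).ncard = 3 ∧ M.rnk (K4triangle v) = 2) ∧
      {L | M.Locked L}.ncard = 4 := by
  have hcs := K4.isCircuit_coe_iff hcirc
  have hks := K4.dual_isCircuit_coe_iff hE hcirc
  have locked_iff (L : Set K4Edge) : M.Locked L ↔ ∃ v, L = K4triangle v := by
    obtain ⟨l, rfl⟩ := L.toFinite.exists_finset_coe
    simp only [CircuitList.locked_iff hE hcs hks, K4.locked_iff, ← K4.coe_triangle,
      Finset.coe_inj]
  have locked_eq : {L | M.Locked L} = range K4triangle :=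
    Set.ext fun L => (locked_iff L).trans (exists_congr fun _ => eq_comm)
  refine ⟨Set.ext locked_iff, fun v => ⟨?_, ?_⟩, ?_⟩
  · rw [← K4.coe_triangle, ncard_coe_finset, K4.card_triangle]
  · rw [← K4.coe_triangle, CircuitList.rnk_eq hE hcs, K4.rank_triangle]
  · rw [locked_eq, ncard_range_of_injective K4triangle_injective, Nat.card_eq_fintype_card,
      Fintype.card_fin]
end

section
/- A uniform matroid U(r,n) with 0 < r < n has no locked subsets (i.e., uniform matroids are 0-locked). -/
open Set Matroid

variable {α : Type*}

/-!
If `L` is locked, then `M|L` is 2-connected with at least two elements, so it has a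
circuit and `L` is dependent; dually `E \ L` is codependent, i.e. `L` is not spanning.
In `U(r,n)` every dependent set has more than `r` elements, hence contains a base and
is spanning, so no set is locked.
-/

namespace Matroid

lemma nontrivial_of_two_le_rnk {M : Matroid α} {X : Set α} (h : 2 ≤ M.rnk X) :
    X.Nontrivial := by
  by_contra hX
  have hle : M.rnk X ≤ 1 := by
    refine csSup_le ⟨0, ∅, ⟨M.empty_indep, empty_subset X⟩, ncard_empty α⟩ ?_
    rintro _ ⟨I, ⟨-, hIX⟩, rfl⟩
    have hI : I.Subsingleton := (not_nontrivial_iff.1 hX).anti hIX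
    exact (ncard_le_one hI.finite).2 fun _ ha _ hb => hI ha hb
  omega

lemma TwoConnected.not_indep_ground {M : Matroid α} (hM : M.TwoConnected)
    (hE : M.E.Nontrivial) : ¬ M.Indep M.E := by
  obtain ⟨e, he, f, hf, hef⟩ := hE
  obtain ⟨C, ⟨hCE, hCdep, -⟩, -⟩ := hM.2 e he f hf hef
  exact fun hind => hCdep (hind.subset hCE)

lemma Locked.dep {M : Matroid α} {L : Set α} (hL : M.Locked L) : M.Dep L := by
  obtain ⟨hLE, hconn, -, hrk, -⟩ := hL
  have hL : ¬ (M ↾ L).Indep L := hconn.not_indep_ground (nontrivial_of_two_le_rnk hrk)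
  rw [restrict_indep_iff] at hL
  exact ⟨fun hind => hL ⟨hind, subset_rfl⟩, hLE.subset⟩

lemma Locked.not_spanning {M : Matroid α} {L : Set α} (hL : M.Locked L) :
    ¬ M.Spanning L := by
  obtain ⟨hLE, -, hconn, -, hrk⟩ := hL
  have hL : ¬ (M✶ ↾ (M.E \ L)).Indep (M.E \ L) :=
    hconn.not_indep_ground (nontrivial_of_two_le_rnk hrk)
  rw [restrict_indep_iff] at hL
  rw [spanning_iff_compl_coindep hLE.subset, coindep_def]
  exact fun hind => hL ⟨hind, subset_rfl⟩

lemma Dep.spanning_of_indep_iff {M : Matroid α} [M.Finite] {r : ℕ}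
    (hunif : ∀ I, M.Indep I ↔ I ⊆ M.E ∧ I.ncard ≤ r) {D : Set α} (hD : M.Dep D) :
    M.Spanning D := by
  have hrD : r ≤ D.ncard :=
    (not_le.1 fun h => hD.not_indep ((hunif D).2 ⟨hD.subset_ground, h⟩)).le
  obtain ⟨B, hBD, hBr⟩ := exists_subset_card_eq hrD
  have hB : M.Indep B := (hunif B).2 ⟨hBD.trans hD.subset_ground, hBr.le⟩
  refine IsBase.spanning_of_superset (hB.isBase_of_maximal fun J hJ hBJ => ?_) hBD
  have hJr : J.ncard ≤ B.ncard := hBr ▸ ((hunif J).1 hJ).2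
  exact eq_of_subset_of_ncard_le hBJ hJr hJ.finite

end Matroid

theorem uniform_no_locked_general (M : Matroid α) [M.Finite] (r : ℕ)
    (hunif : ∀ I, M.Indep I ↔ I ⊆ M.E ∧ I.ncard ≤ r) :
    ∀ L, ¬ M.Locked L :=
  fun _ hL => hL.not_spanning (hL.dep.spanning_of_indep_iff hunif)

/-- A uniform matroid `U(r,n)` with `0 < r < n` has no locked subsets
(uniform matroids are 0-locked). -/
theorem uniform_no_locked (M : Matroid α) [M.Finite] (r n : ℕ)
    (hrn : 0 < r ∧ r < n) (hn : M.E.ncard = n)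
    (hunif : ∀ I, M.Indep I ↔ I ⊆ M.E ∧ I.ncard ≤ r) :
    ∀ L, ¬ M.Locked L :=
  uniform_no_locked_general M r hunif
end
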